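/- With the grading deg x^i = 2i and deg y = 2N, the graded dimension of the Jacobi algebra J = ℚ[x,y]/(y² + (2N+1)x^{2N}, xy) equals (q^{4N+2} − 1)/(q² − 1) + q^{2N}; equivalently, the degree-2i graded piece of J has dimension 1 for 0 ≤ i ≤ 2N with i ≠ N, dimension 2 for i = N, and dimension 0 otherwise. -/
import Mathlib

open MvPolynomial

noncomputable def jacobiIdeal (N : ℕ) : Ideal (MvPolynomial (Fin 2) ℚ) :=
  Ideal.span {X 1 ^ 2 + C ((2 * N + 1 : ℕ) : ℚ) * X 0 ^ (2 * N), X 0 * X 1}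

/-- The weights `deg x = 2`, `deg y = 2N`. -/
def jacobiWeight (N : ℕ) : Fin 2 → ℕ := fun i => if i = 0 then 2 else 2 * N

/-- The degree-`d` graded piece of the Jacobi algebra: the span of the images of
weighted-homogeneous polynomials of weighted degree `d`. -/
noncomputable def jacobiPiece (N d : ℕ) :
    Submodule ℚ (MvPolynomial (Fin 2) ℚ ⧸ jacobiIdeal N) :=
  Submodule.span ℚ
    (Ideal.Quotient.mk (jacobiIdeal N) ''
      {p | MvPolynomial.IsWeightedHomogeneous (jacobiWeight N) p d})

namespace JacobiProof

variable (N : ℕ)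

lemma mem_f : (X 1 ^ 2 + C ((2 * N + 1 : ℕ) : ℚ) * X 0 ^ (2 * N) : MvPolynomial (Fin 2) ℚ)
    ∈ jacobiIdeal N :=
  Ideal.subset_span (Set.mem_insert _ _)

lemma mem_g : (X 0 * X 1 : MvPolynomial (Fin 2) ℚ) ∈ jacobiIdeal N :=
  Ideal.subset_span (Set.mem_insert_of_mem _ rfl)

lemma mem_xy (a b : ℕ) (ha : 1 ≤ a) (hb : 1 ≤ b) :
    (X 0 ^ a * X 1 ^ b : MvPolynomial (Fin 2) ℚ) ∈ jacobiIdeal N := by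
  obtain ⟨a', rfl⟩ := Nat.exists_eq_add_of_le ha
  obtain ⟨b', rfl⟩ := Nat.exists_eq_add_of_le hb
  have h : (X 0 ^ (1 + a') * X 1 ^ (1 + b') : MvPolynomial (Fin 2) ℚ)
      = (X 0 ^ a' * X 1 ^ b') * (X 0 * X 1) := by ring
  rw [h]
  exact Ideal.mul_mem_left _ _ (mem_g N)

lemma mem_xpow (a : ℕ) (h : 2 * N + 1 ≤ a) :
    (X 0 ^ a : MvPolynomial (Fin 2) ℚ) ∈ jacobiIdeal N := by
  obtain ⟨c, rfl⟩ := Nat.exists_eq_add_of_le h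
  have hk : ((2 * N + 1 : ℕ) : ℚ) ≠ 0 := by positivity
  have key : (X 0 ^ (2 * N + 1) : MvPolynomial (Fin 2) ℚ)
      = C (((2 * N + 1 : ℕ) : ℚ))⁻¹ *
        (X 0 * (X 1 ^ 2 + C ((2 * N + 1 : ℕ) : ℚ) * X 0 ^ (2 * N)) - X 1 * (X 0 * X 1)) := by
    have h2 : (X 0 * (X 1 ^ 2 + C ((2 * N + 1 : ℕ) : ℚ) * X 0 ^ (2 * N)) - X 1 * (X 0 * X 1)
        : MvPolynomial (Fin 2) ℚ) = C ((2 * N + 1 : ℕ) : ℚ) * X 0 ^ (2 * N + 1) := by ring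
    rw [h2, ← mul_assoc, ← C_mul, inv_mul_cancel₀ hk, C_1, one_mul]
  have h1 : (X 0 ^ (2 * N + 1) : MvPolynomial (Fin 2) ℚ) ∈ jacobiIdeal N := by
    rw [key]
    exact Ideal.mul_mem_left _ _
      (Ideal.sub_mem _ (Ideal.mul_mem_left _ _ (mem_f N)) (Ideal.mul_mem_left _ _ (mem_g N)))
  rw [pow_add]
  exact Ideal.mul_mem_right _ _ h1

lemma mem_ypow (hN : 1 ≤ N) (b : ℕ) (hb : 3 ≤ b) :
    (X 1 ^ b : MvPolynomial (Fin 2) ℚ) ∈ jacobiIdeal N := by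
  obtain ⟨c, rfl⟩ := Nat.exists_eq_add_of_le hb
  have h : (X 1 ^ (3 + c) : MvPolynomial (Fin 2) ℚ)
      = X 1 ^ (1 + c) * (X 1 ^ 2 + C ((2 * N + 1 : ℕ) : ℚ) * X 0 ^ (2 * N))
        - C ((2 * N + 1 : ℕ) : ℚ) * (X 0 ^ (2 * N) * X 1 ^ (1 + c)) := by ring
  rw [h]
  exact Ideal.sub_mem _ (Ideal.mul_mem_left _ _ (mem_f N))
    (Ideal.mul_mem_left _ _ (mem_xy N _ _ (by omega) (by omega)))

lemma gen_decomp (a b : MvPolynomial (Fin 2) ℚ) :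
    a * (X 1 ^ 2 + C ((2 * N + 1 : ℕ) : ℚ) * X 0 ^ (2 * N)) + b * (X 0 * X 1)
      = a * monomial (Finsupp.single 1 2) 1
        + a * monomial (Finsupp.single 0 (2 * N)) ((2 * N + 1 : ℕ) : ℚ)
        + b * monomial (Finsupp.single 0 1 + Finsupp.single 1 1) 1 := by
  have h1 : (X 1 ^ 2 : MvPolynomial (Fin 2) ℚ) = monomial (Finsupp.single 1 2) 1 :=
    X_pow_eq_monomial ..
  have h2 : (C ((2 * N + 1 : ℕ) : ℚ) * X 0 ^ (2 * N) : MvPolynomial (Fin 2) ℚ)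
      = monomial (Finsupp.single 0 (2 * N)) ((2 * N + 1 : ℕ) : ℚ) := by
    rw [X_pow_eq_monomial, C_mul_monomial, mul_one]
  have h3 : (X 0 * X 1 : MvPolynomial (Fin 2) ℚ)
      = monomial (Finsupp.single 0 1 + Finsupp.single 1 1) 1 := by
    rw [← pow_one (X 0 : MvPolynomial (Fin 2) ℚ), ← pow_one (X 1 : MvPolynomial (Fin 2) ℚ),
      X_pow_eq_monomial, X_pow_eq_monomial, monomial_mul, mul_one]
  rw [mul_add, h1, h2, h3, add_assoc]

lemma coeff_zero_of_mem (hN : 1 ≤ N) (p : MvPolynomial (Fin 2) ℚ) (hp : p ∈ jacobiIdeal N)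
    (m : Fin 2 →₀ ℕ) (h1 : m 1 < 2) (h2 : m 0 < 2 * N) (h3 : m 0 = 0 ∨ m 1 = 0) :
    coeff m p = 0 := by
  obtain ⟨a, b, hab⟩ := Ideal.mem_span_pair.mp hp
  rw [← hab, gen_decomp]
  have c1 : coeff m (a * monomial (Finsupp.single 1 2) 1) = 0 := by
    rw [coeff_mul_monomial', if_neg]
    rw [Finsupp.single_le_iff]; omega
  have c2 : coeff m (a * monomial (Finsupp.single 0 (2 * N)) ((2 * N + 1 : ℕ) : ℚ)) = 0 := by
    rw [coeff_mul_monomial', if_neg]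
    rw [Finsupp.single_le_iff]; omega
  have c3 : coeff m (b * monomial (Finsupp.single 0 1 + Finsupp.single 1 1) 1) = 0 := by
    rw [coeff_mul_monomial', if_neg]
    intro hle
    have h0 := (Finsupp.le_def.mp hle) 0
    have h1' := (Finsupp.le_def.mp hle) 1
    simp [Finsupp.single_apply] at h0 h1'
    omega
  rw [coeff_add, coeff_add, c1, c2, c3]
  ring

lemma coeff_top_of_mem (hN : 1 ≤ N) (p : MvPolynomial (Fin 2) ℚ) (hp : p ∈ jacobiIdeal N) :
    coeff (Finsupp.single 0 (2 * N)) p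
      = ((2 * N + 1 : ℕ) : ℚ) * coeff (Finsupp.single 1 2) p := by
  obtain ⟨a, b, hab⟩ := Ideal.mem_span_pair.mp hp
  rw [← hab, gen_decomp]
  have c1 : coeff (Finsupp.single 0 (2 * N)) (a * monomial (Finsupp.single 1 2) 1) = 0 := by
    rw [coeff_mul_monomial', if_neg]
    rw [Finsupp.single_le_iff]
    simp [Finsupp.single_apply]
  have c2 : coeff (Finsupp.single 0 (2 * N))
      (a * monomial (Finsupp.single 0 (2 * N)) ((2 * N + 1 : ℕ) : ℚ))
      = coeff 0 a * ((2 * N + 1 : ℕ) : ℚ) := by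
    rw [coeff_mul_monomial', if_pos le_rfl, tsub_self]
  have c3 : coeff (Finsupp.single 0 (2 * N))
      (b * monomial (Finsupp.single 0 1 + Finsupp.single 1 1) 1) = 0 := by
    rw [coeff_mul_monomial', if_neg]
    intro hle
    have h1' := (Finsupp.le_def.mp hle) 1
    simp [Finsupp.single_apply] at h1'
  have d1 : coeff (Finsupp.single 1 2) (a * monomial (Finsupp.single 1 2) 1)
      = coeff 0 a := by
    rw [coeff_mul_monomial', if_pos le_rfl, tsub_self, mul_one]
  have d2 : coeff (Finsupp.single 1 2)
      (a * monomial (Finsupp.single 0 (2 * N)) ((2 * N + 1 : ℕ) : ℚ)) = 0 := by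
    rw [coeff_mul_monomial', if_neg]
    rw [Finsupp.single_le_iff]
    simp [Finsupp.single_apply]
    omega
  have d3 : coeff (Finsupp.single 1 2)
      (b * monomial (Finsupp.single 0 1 + Finsupp.single 1 1) 1) = 0 := by
    rw [coeff_mul_monomial', if_neg]
    intro hle
    have h0 := (Finsupp.le_def.mp hle) 0
    simp [Finsupp.single_apply] at h0
  rw [coeff_add, coeff_add, coeff_add, coeff_add, c1, c2, c3, d1, d2, d3]
  ring

lemma mk_C_mul (c : ℚ) (p : MvPolynomial (Fin 2) ℚ) :
    Ideal.Quotient.mk (jacobiIdeal N) (C c * p)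
      = c • Ideal.Quotient.mk (jacobiIdeal N) p := by
  rw [← smul_eq_C_mul, ← Ideal.Quotient.mkₐ_eq_mk ℚ (jacobiIdeal N)]
  exact map_smul (Ideal.Quotient.mkₐ ℚ (jacobiIdeal N)) c p

lemma weight_fin2 (v : Fin 2 →₀ ℕ) :
    Finsupp.weight (jacobiWeight N) v = 2 * v 0 + 2 * N * v 1 := by
  rw [Finsupp.weight_apply, Finsupp.sum_fintype _ _ (fun i => by simp), Fin.sum_univ_two]
  simp only [jacobiWeight, smul_eq_mul]
  norm_num
  ring

lemma monomial_eq_fin2 (v : Fin 2 →₀ ℕ) (c : ℚ) :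
    (monomial v c : MvPolynomial (Fin 2) ℚ) = C c * (X 0 ^ (v 0) * X 1 ^ (v 1)) := by
  rw [monomial_eq, Finsupp.prod_fintype _ _ (fun i => pow_zero _), Fin.prod_univ_two]

lemma homog_xpow (k : ℕ) :
    IsWeightedHomogeneous (jacobiWeight N) (X 0 ^ k : MvPolynomial (Fin 2) ℚ) (2 * k) := by
  rw [X_pow_eq_monomial]
  apply isWeightedHomogeneous_monomial
  rw [weight_fin2]
  simp [Finsupp.single_apply]

lemma homog_y :
    IsWeightedHomogeneous (jacobiWeight N) (X 1 : MvPolynomial (Fin 2) ℚ) (2 * N) := by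
  have h := isWeightedHomogeneous_X ℚ (jacobiWeight N) (1 : Fin 2)
  simpa [jacobiWeight] using h

noncomputable def jacobiBasis (N d : ℕ) : Set (MvPolynomial (Fin 2) ℚ ⧸ jacobiIdeal N) :=
  if d = 2 * N then
    {Ideal.Quotient.mk (jacobiIdeal N) (X 0 ^ N), Ideal.Quotient.mk (jacobiIdeal N) (X 1)}
  else if d % 2 = 0 ∧ d ≤ 4 * N then
    {Ideal.Quotient.mk (jacobiIdeal N) (X 0 ^ (d / 2))}
  else ∅

lemma mk_pow_mem (hN : 1 ≤ N) {a b d : ℕ} (h : 2 * a + 2 * N * b = d) :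
    Ideal.Quotient.mk (jacobiIdeal N) (X 0 ^ a * X 1 ^ b) ∈
      Submodule.span ℚ (jacobiBasis N d) := by
  have hzero : ∀ q : MvPolynomial (Fin 2) ℚ, q ∈ jacobiIdeal N →
      Ideal.Quotient.mk (jacobiIdeal N) q ∈ Submodule.span ℚ (jacobiBasis N d) := by
    intro q hq
    rw [Ideal.Quotient.eq_zero_iff_mem.mpr hq]
    exact Submodule.zero_mem _
  by_cases hb0 : b = 0
  · subst hb0
    rw [pow_zero, mul_one]
    by_cases ha : a ≤ 2 * N
    · by_cases hd : d = 2 * N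
      · have haN : a = N := by omega
        subst haN
        rw [jacobiBasis, if_pos hd]
        exact Submodule.subset_span (Set.mem_insert _ _)
      · rw [jacobiBasis, if_neg hd, if_pos ⟨by omega, by omega⟩]
        have hda : d / 2 = a := by omega
        rw [hda]
        exact Submodule.subset_span rfl
    · exact hzero _ (mem_xpow N a (by omega))
  · by_cases hb1 : b = 1
    · subst hb1
      by_cases ha : a = 0
      · subst ha
        rw [pow_zero, one_mul, pow_one]
        have hd : d = 2 * N := by omega
        rw [jacobiBasis, if_pos hd]
        exact Submodule.subset_span (Set.mem_insert_of_mem _ rfl)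
      · exact hzero _ (mem_xy N a 1 (by omega) le_rfl)
    · by_cases ha : a = 0
      · subst ha
        rw [pow_zero, one_mul]
        by_cases hb2 : b = 2
        · subst hb2
          have hne : d ≠ 2 * N := by omega
          have hmk : Ideal.Quotient.mk (jacobiIdeal N) (X 1 ^ 2 : MvPolynomial (Fin 2) ℚ)
              = (-((2 * N + 1 : ℕ) : ℚ)) •
                Ideal.Quotient.mk (jacobiIdeal N) (X 0 ^ (2 * N)) := by
            rw [neg_smul, ← mk_C_mul, eq_neg_iff_add_eq_zero, ← map_add,
              Ideal.Quotient.eq_zero_iff_mem]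
            exact mem_f N
          rw [hmk, jacobiBasis, if_neg hne, if_pos ⟨by omega, by omega⟩]
          have hd2 : d / 2 = 2 * N := by omega
          rw [hd2]
          exact Submodule.smul_mem _ _ (Submodule.subset_span rfl)
        · exact hzero _ (mem_ypow N hN b (by omega))
      · exact hzero _ (mem_xy N a b (by omega) (by omega))

lemma piece_eq (hN : 1 ≤ N) (d : ℕ) :
    jacobiPiece N d = Submodule.span ℚ (jacobiBasis N d) := by
  apply le_antisymm
  · rw [jacobiPiece, Submodule.span_le]
    rintro _ ⟨p, hp, rfl⟩
    rw [p.as_sum, map_sum]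
    refine Submodule.sum_mem _ fun v hv => ?_
    rw [monomial_eq_fin2, mk_C_mul]
    refine Submodule.smul_mem _ _ (mk_pow_mem N hN ?_)
    have hw := hp (mem_support_iff.mp hv)
    rw [weight_fin2] at hw
    exact hw
  · rw [Submodule.span_le]
    intro z hz
    rw [jacobiBasis] at hz
    split_ifs at hz with hd1 hd2
    · rcases hz with rfl | rfl
      · refine Submodule.subset_span ⟨X 0 ^ N, ?_, rfl⟩
        have h := homog_xpow N N
        rwa [show (2 * N : ℕ) = d from hd1.symm] at h
      · refine Submodule.subset_span ⟨X 1, ?_, rfl⟩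
        have h := homog_y N
        rwa [show (2 * N : ℕ) = d from hd1.symm] at h
    · rcases hz with rfl
      refine Submodule.subset_span ⟨X 0 ^ (d / 2), ?_, rfl⟩
      have h := homog_xpow N (d / 2)
      rwa [show 2 * (d / 2) = d by omega] at h
    · exact absurd hz (Set.notMem_empty z)

end JacobiProof

/-- The graded dimension of `J = ℚ[x,y]/(y² + (2N+1)x^{2N}, xy)` with `deg x = 2`,
`deg y = 2N`: the degree-`d` piece has dimension `2` if `d = 2N`, dimension `1`
if `d` is even with `d ≤ 4N` and `d ≠ 2N`, and dimension `0` otherwise.  This is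
the coefficient-wise statement of `gdim J = (q^{4N+2}-1)/(q²-1) + q^{2N}`. -/
theorem jacobi_graded_dimension (N : ℕ) (hN : 1 ≤ N) (d : ℕ) :
    Module.finrank ℚ (jacobiPiece N d) =
      if d = 2 * N then 2
      else if d % 2 = 0 ∧ d ≤ 4 * N then 1
      else 0 := by
  rw [JacobiProof.piece_eq N hN d, JacobiProof.jacobiBasis]
  by_cases h1 : d = 2 * N
  · rw [if_pos h1, if_pos h1]
    set u := Ideal.Quotient.mk (jacobiIdeal N) (X 0 ^ N : MvPolynomial (Fin 2) ℚ) with hu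
    set v := Ideal.Quotient.mk (jacobiIdeal N) (X 1 : MvPolynomial (Fin 2) ℚ) with hv
    have hrange : ({u, v} : Set _) = Set.range ![u, v] := by
      ext z
      simp only [Set.mem_insert_iff, Set.mem_singleton_iff, Set.mem_range, Fin.exists_fin_two,
        Matrix.cons_val_zero, Matrix.cons_val_one, Matrix.head_cons]
      tauto
    have hli : LinearIndependent ℚ ![u, v] := by
      rw [LinearIndependent.pair_iff]
      intro s t hst
      have hst' : (C s * X 0 ^ N + C t * X 1 : MvPolynomial (Fin 2) ℚ) ∈ jacobiIdeal N := by
        rw [← Ideal.Quotient.eq_zero_iff_mem, map_add, JacobiProof.mk_C_mul,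
          JacobiProof.mk_C_mul]
        exact hst
      have e1 := JacobiProof.coeff_zero_of_mem N hN _ hst' (Finsupp.single 0 N)
        (by simp [Finsupp.single_apply]) (by simp [Finsupp.single_apply]; omega)
        (Or.inr (by simp [Finsupp.single_apply]))
      have e2 := JacobiProof.coeff_zero_of_mem N hN _ hst' (Finsupp.single 1 1)
        (by simp [Finsupp.single_apply]) (by simp [Finsupp.single_apply]; omega)
        (Or.inl (by simp [Finsupp.single_apply]))
      rw [coeff_add, coeff_C_mul, coeff_C_mul, coeff_X_pow, coeff_X'] at e1 e2
      have hne1 : ¬ (Finsupp.single (0 : Fin 2) N = Finsupp.single 1 1) := by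
        intro hEq
        have h0 := DFunLike.congr_fun hEq 0
        simp [Finsupp.single_apply] at h0
        omega
      have hne2 : ¬ (Finsupp.single (1 : Fin 2) 1 = Finsupp.single 0 N) := by
        intro hEq
        have h0 := DFunLike.congr_fun hEq 1
        simp [Finsupp.single_apply] at h0
      rw [if_pos rfl, if_neg hne2] at e1
      rw [if_neg hne1, if_pos rfl] at e2
      constructor
      · simpa using e1
      · simpa using e2
    rw [hrange, finrank_span_eq_card hli]
    simp
  · by_cases h2 : d % 2 = 0 ∧ d ≤ 4 * N
    · rw [if_neg h1, if_neg h1, if_pos h2, if_pos h2]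
      have hne : Ideal.Quotient.mk (jacobiIdeal N) (X 0 ^ (d / 2) : MvPolynomial (Fin 2) ℚ)
          ≠ 0 := by
        intro h0
        rw [Ideal.Quotient.eq_zero_iff_mem] at h0
        by_cases hcase : d / 2 = 2 * N
        · have hco := JacobiProof.coeff_top_of_mem N hN _ h0
          rw [hcase] at hco
          rw [coeff_X_pow, coeff_X_pow, if_pos rfl, if_neg] at hco
          · norm_num at hco
          · intro hEq
            have h3 := DFunLike.congr_fun hEq 1
            simp [Finsupp.single_apply] at h3
        · have hco := JacobiProof.coeff_zero_of_mem N hN _ h0 (Finsupp.single 0 (d / 2))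
            (by simp [Finsupp.single_apply]) (by simp [Finsupp.single_apply]; omega)
            (Or.inr (by simp [Finsupp.single_apply]))
          rw [coeff_X_pow, if_pos rfl] at hco
          norm_num at hco
      rw [finrank_span_singleton hne]
    · rw [if_neg h1, if_neg h1, if_neg h2, if_neg h2, Submodule.span_empty, finrank_bot]
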